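/- arXiv:2503.06377 — 8 statements merged into one kernel-verified Lean document; each statement's English description precedes it below -/
import Mathlib

section
/- Let n ≥ 1 and m ∈ {1, …, n+1}. The vectors of minimum norm in the coset mα_n + A_n are exactly the vectors (m/(n+1)) Σ_{i ∉ I} e_i − ((n+1−m)/(n+1)) Σ_{i ∈ I} e_i for I a subset of [n+1] of size m, and their common squared norm is m(n+1−m)/(n+1). -/
/-!
Write `c = m/(n+1)`. Since `mα_n = c·𝟙 - m·e_{n+1}`, the coset `mα_n + A_n` consists of the
vectors `c·𝟙 - u` with `u ∈ ℤ^{n+1}` and `Σ uᵢ = m`. For these,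
`‖c·𝟙 - u‖² = Σ uᵢ(uᵢ - 1) + m(n+1-m)/(n+1)`, and `uᵢ(uᵢ - 1) ≥ 0` for integers with equality
exactly when `uᵢ ∈ {0, 1}`. So the minimum is attained exactly when `u` is the indicator of a set
`I` of size `m`.
-/

open Finset

lemma Int.mul_sub_one_nonneg (z : ℤ) : 0 ≤ z * (z - 1) := by
  rcases le_or_gt z 0 with h | h <;> nlinarith

def rootLattice (ι : Type*) [Fintype ι] : Set (ι → ℝ) :=
  {x | (∀ i, ∃ z : ℤ, x i = z) ∧ ∑ i, x i = 0}

section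

variable {ι : Type*} [Fintype ι]

lemma sub_const_sub_mem_rootLattice_iff (v : ι → ℝ) (c : ℝ) (x₀ : ι → ℤ) :
    v - (fun i => c - x₀ i) ∈ rootLattice ι ↔
      ∃ u : ι → ℤ, ∑ i, u i = ∑ i, x₀ i ∧ v = fun i => c - u i := by
  constructor
  · rintro ⟨hint, hsum⟩
    choose z hz using hint
    have hz0 : ∑ i, z i = 0 := by
      exact_mod_cast (sum_congr rfl fun i _ => (hz i).symm).trans hsum
    refine ⟨x₀ - z, by simp [sum_sub_distrib, hz0], funext fun i => ?_⟩
    have := hz i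
    simp only [Pi.sub_apply, Int.cast_sub] at this ⊢
    linarith
  · rintro ⟨u, hu, rfl⟩
    refine ⟨fun i => ⟨x₀ i - u i, by simp⟩, ?_⟩
    have hu' : ∑ i, (u i : ℝ) = ∑ i, (x₀ i : ℝ) := by exact_mod_cast hu
    simp [sum_sub_distrib, hu']

lemma sum_div_card_sub_mul_self [Nonempty ι] (u : ι → ℝ) (m : ℝ) (hu : ∑ i, u i = m) :
    ∑ i, (m / Fintype.card ι - u i) * (m / Fintype.card ι - u i) =
      ∑ i, u i * (u i - 1) + m * (Fintype.card ι - m) / Fintype.card ι := by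
  set k : ℝ := (Fintype.card ι : ℝ)
  have hk : k ≠ 0 := by positivity
  have hexpand : ∀ i, (m / k - u i) * (m / k - u i) =
      u i * (u i - 1) + ((1 - 2 * (m / k)) * u i + (m / k) ^ 2) := fun i => by ring
  rw [sum_congr rfl fun i _ => hexpand i, sum_add_distrib, sum_add_distrib,
    ← mul_sum, hu, sum_const, card_univ, nsmul_eq_mul]
  field_simp
  ring

variable [Nonempty ι]

lemma le_sum_div_card_sub_mul_self (u : ι → ℤ) (m : ℝ) (hu : ∑ i, (u i : ℝ) = m) :
    m * (Fintype.card ι - m) / Fintype.card ι ≤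
      ∑ i, (m / Fintype.card ι - u i) * (m / Fintype.card ι - u i) := by
  rw [sum_div_card_sub_mul_self _ m hu, le_add_iff_nonneg_left]
  exact sum_nonneg fun i _ => by exact_mod_cast (u i).mul_sub_one_nonneg

lemma sum_div_card_sub_mul_self_eq_iff [DecidableEq ι] (u : ι → ℤ) (m : ℕ) (hu : ∑ i, u i = m) :
    ∑ i, ((m : ℝ) / Fintype.card ι - u i) * (m / Fintype.card ι - u i) =
        m * (Fintype.card ι - m) / Fintype.card ι ↔
      ∃ I : Finset ι, I.card = m ∧ u = fun i => if i ∈ I then 1 else 0 := by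
  have hu' : ∑ i, (u i : ℝ) = m := by exact_mod_cast hu
  have hnonneg : ∀ i ∈ univ, (0 : ℝ) ≤ u i * (u i - 1) := fun i _ => by
    exact_mod_cast (u i).mul_sub_one_nonneg
  rw [sum_div_card_sub_mul_self _ _ hu', add_eq_right, sum_eq_zero_iff_of_nonneg hnonneg]
  constructor
  · intro h
    have h01 : ∀ i, u i = 0 ∨ u i = 1 := fun i => by
      have : u i * (u i - 1) = 0 := by exact_mod_cast h i (mem_univ i)
      simpa [sub_eq_zero] using this
    have hind : u = fun i => if i ∈ univ.filter (u · = 1) then 1 else 0 := by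
      funext i
      rcases h01 i with hi | hi <;> simp [hi]
    refine ⟨univ.filter (u · = 1), ?_, hind⟩
    rw [hind] at hu
    simpa using hu
  · rintro ⟨I, -, rfl⟩ i -
    by_cases hi : i ∈ I <;> simp [hi]

theorem exists_sum_eq_and_sum_mul_self_eq_iff [DecidableEq ι] (v : ι → ℝ) (m : ℕ) :
    ((∃ u : ι → ℤ, ∑ i, u i = m ∧ v = fun i => (m : ℝ) / Fintype.card ι - u i) ∧
        ∑ i, v i * v i = m * (Fintype.card ι - m) / Fintype.card ι) ↔
      ∃ I : Finset ι, I.card = m ∧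
        v = fun i => if i ∈ I then -((Fintype.card ι - m) / Fintype.card ι : ℝ)
          else m / Fintype.card ι := by
  have hk : (Fintype.card ι : ℝ) ≠ 0 := by positivity
  constructor
  · rintro ⟨⟨u, hu, rfl⟩, hnorm⟩
    obtain ⟨I, hI, rfl⟩ := (sum_div_card_sub_mul_self_eq_iff u m hu).1 hnorm
    refine ⟨I, hI, funext fun i => ?_⟩
    by_cases hi : i ∈ I
    · simp only [hi, if_true, Int.cast_one]
      field_simp
      ring
    · simp [hi]
  · rintro ⟨I, hI, rfl⟩
    let u : ι → ℤ := fun i => if i ∈ I then 1 else 0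
    have hu : ∑ i, u i = m := by simp [u, hI]
    have hv : (fun i => if i ∈ I then -((Fintype.card ι - m) / Fintype.card ι : ℝ)
        else m / Fintype.card ι) = fun i => (m : ℝ) / Fintype.card ι - u i := by
      funext i
      by_cases hi : i ∈ I
      · simp only [u, hi, if_true, Int.cast_one]
        field_simp
        ring
      · simp [u, hi]
    refine ⟨⟨u, hu, hv⟩, ?_⟩
    rw [hv]
    exact (sum_div_card_sub_mul_self_eq_iff u m hu).2 ⟨I, hI, rfl⟩

end

lemma smul_alpha_eq (n m : ℕ) :
    (m : ℝ) • (fun i : Fin (n + 1) => if (i : ℕ) = n then -((n : ℝ) / (n + 1)) else 1 / (n + 1)) =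
      fun i => (m : ℝ) / (n + 1) - ((Pi.single (Fin.last n) (m : ℤ) : Fin (n + 1) → ℤ) i : ℝ) := by
  funext i
  by_cases hi : i = Fin.last n
  · subst hi
    simp only [Pi.smul_apply, Fin.val_last, ↓reduceIte, smul_eq_mul, Pi.single_eq_same,
      Int.cast_natCast]
    field_simp
    ring
  · have hin : (i : ℕ) ≠ n := fun h => hi (Fin.ext h)
    simp [hin, hi]
    field_simp

theorem stmt3_general (n m : ℕ)
    (A : Set (Fin (n + 1) → ℝ))
    (hA : A = {x | (∀ i, ∃ z : ℤ, x i = (z : ℝ)) ∧ ∑ i, x i = 0})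
    (α : Fin (n + 1) → ℝ)
    (hα : α = fun i : Fin (n + 1) => if (i : ℕ) = n then -((n : ℝ) / (n + 1)) else 1 / (n + 1)) :
    (∀ v : Fin (n + 1) → ℝ, v - (m : ℝ) • α ∈ A →
        (m : ℝ) * ((n : ℝ) + 1 - m) / ((n : ℝ) + 1) ≤ ∑ t, v t * v t) ∧
    (∀ v : Fin (n + 1) → ℝ,
        (v - (m : ℝ) • α ∈ A ∧ ∑ t, v t * v t = (m : ℝ) * ((n : ℝ) + 1 - m) / ((n : ℝ) + 1)) ↔
        (∃ I : Finset (Fin (n + 1)), I.card = m ∧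
          v = fun i => if i ∈ I then -(((n : ℝ) + 1 - m) / ((n : ℝ) + 1))
                       else (m : ℝ) / ((n : ℝ) + 1))) := by
  subst hA hα
  have hk : (Fintype.card (Fin (n + 1)) : ℝ) = n + 1 := by simp
  have hcoset : ∀ v : Fin (n + 1) → ℝ, v - (m : ℝ) • (fun i : Fin (n + 1) =>
      if (i : ℕ) = n then -((n : ℝ) / (n + 1)) else 1 / (n + 1)) ∈ rootLattice (Fin (n + 1)) ↔
      ∃ u : Fin (n + 1) → ℤ, ∑ i, u i = m ∧
        v = fun i => (m : ℝ) / Fintype.card (Fin (n + 1)) - u i := by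
    intro v
    rw [smul_alpha_eq, sub_const_sub_mem_rootLattice_iff, hk]
    simp
  refine ⟨fun v hv => ?_, fun v => ?_⟩
  · obtain ⟨u, hu, rfl⟩ := (hcoset v).1 hv
    simpa only [hk] using le_sum_div_card_sub_mul_self u m (by exact_mod_cast hu)
  · simpa only [hk, rootLattice] using
      (and_congr_left' (hcoset v)).trans (exists_sum_eq_and_sum_mul_self_eq_iff v m)

/-- Let n ≥ 1 and m ∈ {1, …, n+1}.  The vectors of minimum norm in the coset
`m·α_n + A_n` are exactly the vectors
`(m/(n+1)) Σ_{i ∉ I} e_i − ((n+1−m)/(n+1)) Σ_{i ∈ I} e_i` for `I ⊆ [n+1]` with `|I| = m`,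
and their common squared norm is `m(n+1−m)/(n+1)`. -/
theorem stmt3 (n m : ℕ) (hn : 1 ≤ n) (hm1 : 1 ≤ m) (hm2 : m ≤ n + 1)
    (A : Set (Fin (n + 1) → ℝ))
    (hA : A = {x | (∀ i, ∃ z : ℤ, x i = (z : ℝ)) ∧ ∑ i, x i = 0})
    (α : Fin (n + 1) → ℝ)
    (hα : α = fun i : Fin (n + 1) => if (i : ℕ) = n then -((n : ℝ) / (n + 1)) else 1 / (n + 1)) :
    (∀ v : Fin (n + 1) → ℝ, v - (m : ℝ) • α ∈ A →
        (m : ℝ) * ((n : ℝ) + 1 - m) / ((n : ℝ) + 1) ≤ ∑ t, v t * v t) ∧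
    (∀ v : Fin (n + 1) → ℝ,
        (v - (m : ℝ) • α ∈ A ∧ ∑ t, v t * v t = (m : ℝ) * ((n : ℝ) + 1 - m) / ((n : ℝ) + 1)) ↔
        (∃ I : Finset (Fin (n + 1)), I.card = m ∧
          v = fun i => if i ∈ I then -(((n : ℝ) + 1 - m) / ((n : ℝ) + 1))
                       else (m : ℝ) / ((n : ℝ) + 1))) :=
  stmt3_general n m A hA α hα
end

section
/- Suppose (m₁α_9, m₂α_9, α_1) has integer squared norm, where α_9 ∈ ℝ^{10} and α_1 ∈ ℝ² are as defined, and m₁, m₂ are integers with gcd(m₁, m₂, 5) = 1 and the vector generates a group of order 10 modulo A_9⊕A_9⊕A_1. Then {m₁² mod 10, m₂² mod 10} = {1, 4} or {9, 6}. -/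
/-- Suppose (m₁α₉, m₂α₉, α₁) has integer squared norm
(i.e. 10 ∣ 9(m₁² + m₂²) + 5), m₁, m₂ are integers with gcd(m₁, m₂, 5) = 1, and the vector
generates a group of order 10 modulo A₉⊕A₉⊕A₁ (i.e. k·(m₁α₉, m₂α₉, α₁) ∈ L, which means
10 ∣ km₁, 10 ∣ km₂ and 2 ∣ k, forces 10 ∣ k).  Then
{m₁² mod 10, m₂² mod 10} = {1, 4} or {9, 6}. -/
theorem stmt7 (m₁ m₂ : ℤ)
    (hnorm : (10 : ℤ) ∣ 9 * (m₁ ^ 2 + m₂ ^ 2) + 5)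
    (hgcd : Int.gcd m₁ (Int.gcd m₂ 5) = 1)
    (hord : ∀ k : ℤ, ((10 : ℤ) ∣ k * m₁ ∧ (10 : ℤ) ∣ k * m₂ ∧ (2 : ℤ) ∣ k) → (10 : ℤ) ∣ k) :
    ({(m₁ : ZMod 10) ^ 2, (m₂ : ZMod 10) ^ 2} : Set (ZMod 10)) = {1, 4} ∨
    ({(m₁ : ZMod 10) ^ 2, (m₂ : ZMod 10) ^ 2} : Set (ZMod 10)) = {9, 6} := by
  have h1 : (9 : ZMod 10) * ((m₁ : ZMod 10) ^ 2 + (m₂ : ZMod 10) ^ 2) + 5 = 0 := by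
    have := (ZMod.intCast_zmod_eq_zero_iff_dvd (9 * (m₁ ^ 2 + m₂ ^ 2) + 5) 10).mpr hnorm
    push_cast at this
    convert this using 2 <;> norm_num
  have h2 : ¬ (2 * (m₁ : ZMod 10) = 0 ∧ 2 * (m₂ : ZMod 10) = 0) := by
    rintro ⟨ha, hb⟩
    have hd : ¬ (10 : ℤ) ∣ 2 := by decide
    apply hd
    apply hord 2
    refine ⟨?_, ?_, ⟨1, rfl⟩⟩
    · exact (ZMod.intCast_zmod_eq_zero_iff_dvd (2 * m₁) 10).mp (by push_cast; exact ha)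
    · exact (ZMod.intCast_zmod_eq_zero_iff_dvd (2 * m₂) 10).mp (by push_cast; exact hb)
  have key : ∀ a b : ZMod 10, (9 : ZMod 10) * (a ^ 2 + b ^ 2) + 5 = 0 →
      ¬ (2 * a = 0 ∧ 2 * b = 0) →
      (a ^ 2 = 1 ∧ b ^ 2 = 4) ∨ (a ^ 2 = 4 ∧ b ^ 2 = 1) ∨
      (a ^ 2 = 9 ∧ b ^ 2 = 6) ∨ (a ^ 2 = 6 ∧ b ^ 2 = 9) := by decide
  rcases key _ _ h1 h2 with ⟨ha, hb⟩ | ⟨ha, hb⟩ | ⟨ha, hb⟩ | ⟨ha, hb⟩ <;>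
    rw [ha, hb]
  · exact Or.inl rfl
  · exact Or.inl (Set.pair_comm _ _)
  · exact Or.inr rfl
  · exact Or.inr (Set.pair_comm _ _)
end

section
/- Let ω = {u₁, …, u_n} be an affine equiangular set with norm s with respect to a root r. Then the inner product ((2u_i − r)/√2, (2u_j − r)/√2) equals 2s−1 if i = j, and ±1 otherwise; consequently the lines ℝ(2u_i − r) are equiangular with common angle arccos(1/(2s−1)) in the orthogonal complement of r. -/
/-- Let ω = {u₁, …, u_n} be an affine equiangular set with norm s with respect to
a root r.  Then ((2uᵢ − r)/√2, (2uⱼ − r)/√2) equals 2s−1 if i = j, and ±1 otherwise;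
consequently the lines ℝ(2uᵢ − r) are equiangular with common angle arccos(1/(2s−1)) in the
orthogonal complement of r. -/
theorem stmt8 (N n : ℕ) (s : ℝ) (hs : 1 ≤ s)
    (ip : (Fin N → ℝ) → (Fin N → ℝ) → ℝ)
    (hip : ∀ x y, ip x y = ∑ t, x t * y t)
    (r : Fin N → ℝ) (hr : ip r r = 2)
    (u : Fin n → (Fin N → ℝ))
    (h1 : ∀ i, ip (u i) r = 1)
    (h2 : ∀ i, ip (u i) (u i) = s)
    (h3 : ∀ i j, i ≠ j → ip (u i) (u j) = 0 ∨ ip (u i) (u j) = 1)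
    (w : Fin n → (Fin N → ℝ))
    (hw : ∀ i, w i = (Real.sqrt 2)⁻¹ • ((2 : ℝ) • u i - r)) :
    (∀ i, ip (w i) (w i) = 2 * s - 1) ∧
    (∀ i j, i ≠ j → ip (w i) (w j) = -1 ∨ ip (w i) (w j) = 1) ∧
    (∀ i, ip ((2 : ℝ) • u i - r) r = 0) ∧
    (∀ i j, i ≠ j →
      |ip (w i) (w j)| / (Real.sqrt (ip (w i) (w i)) * Real.sqrt (ip (w j) (w j)))
        = 1 / (2 * s - 1)) := by
  have sq2 : (Real.sqrt 2)⁻¹ * (Real.sqrt 2)⁻¹ = 2⁻¹ := by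
    rw [← mul_inv, Real.mul_self_sqrt (by norm_num)]
  have key : ∀ i j, ip (w i) (w j)
      = 2 * ip (u i) (u j) - ip (u i) r - ip (u j) r + 2⁻¹ * ip r r := by
    intro i j
    simp only [hip, hw, Pi.smul_apply, Pi.sub_apply, smul_eq_mul, Finset.mul_sum,
      ← Finset.sum_add_distrib, ← Finset.sum_sub_distrib]
    refine Finset.sum_congr rfl fun t _ => ?_
    linear_combination (2 * u i t - r t) * (2 * u j t - r t) * sq2
  have hrr : ∀ i j, ip (u i) r = ip (u j) r := fun i j => by rw [h1, h1]
  have hii : ∀ i, ip (w i) (w i) = 2 * s - 1 := by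
    intro i; rw [key, h2, h1, hr]; ring
  have hsym : ∀ i j, ip (u i) (u j) = ip (u j) (u i) := by
    intro i j; simp only [hip]
    exact Finset.sum_congr rfl fun t _ => mul_comm _ _
  have hij : ∀ i j, i ≠ j → ip (w i) (w j) = -1 ∨ ip (w i) (w j) = 1 := by
    intro i j hne
    rw [key, h1, h1, hr]
    rcases h3 i j hne with h | h <;> rw [h] <;> [left; right] <;> ring
  refine ⟨hii, hij, ?_, ?_⟩
  · intro i
    have : ip ((2:ℝ) • u i - r) r = ∑ t, (2 * u i t - r t) * r t := by
      rw [hip]; rfl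
    rw [this]
    have h1' := h1 i; have hr' := hr
    rw [hip] at h1' hr'
    have : ∑ t, (2 * u i t - r t) * r t = 2 * (∑ t, u i t * r t) - ∑ t, r t * r t := by
      rw [Finset.mul_sum, ← Finset.sum_sub_distrib]
      exact Finset.sum_congr rfl fun t _ => by ring
    rw [this, h1', hr']; ring
  · intro i j hne
    have hpos : (0:ℝ) < 2 * s - 1 := by linarith
    rw [hii, hii, Real.mul_self_sqrt hpos.le]
    rcases hij i j hne with h | h <;> rw [h] <;> simp
end

section
/- In Λ = (A_9 ⊕ A_9 ⊕ A_1) + ℤ(α_9, 2α_9, α_1), every vector γ with (γ,γ) = 3 and (γ, r) = 1, where r = (0,0,2α_1), lies in L + mα for m ∈ {1, −1, 5} (mod 10); equivalently X = X_1 ∪ X_{−1} ∪ X_5. -/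
noncomputable section

/-- The ambient space ℝ¹⁰ ⊕ ℝ¹⁰ ⊕ ℝ². -/
abbrev V : Type := (Fin 10 → ℝ) × (Fin 10 → ℝ) × (Fin 2 → ℝ)

/-- The standard inner product on ℝ¹⁰ ⊕ ℝ¹⁰ ⊕ ℝ². -/
def ip (x y : V) : ℝ :=
  (∑ t, x.1 t * y.1 t) + (∑ t, x.2.1 t * y.2.1 t) + (∑ t, x.2.2 t * y.2.2 t)

/-- The root lattice A₉ ⊆ ℝ¹⁰. -/
def A9 : Set (Fin 10 → ℝ) := {x | (∀ i, ∃ z : ℤ, x i = (z : ℝ)) ∧ ∑ i, x i = 0}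

/-- The root lattice A₁ ⊆ ℝ². -/
def A1 : Set (Fin 2 → ℝ) := {x | (∀ i, ∃ z : ℤ, x i = (z : ℝ)) ∧ ∑ i, x i = 0}

/-- The lattice L = A₉ ⊕ A₉ ⊕ A₁. -/
def Lset : Set V := {v | v.1 ∈ A9 ∧ v.2.1 ∈ A9 ∧ v.2.2 ∈ A1}

/-- α₉ = (1/10, …, 1/10, −9/10). -/
def α9 : Fin 10 → ℝ := fun i => if (i : ℕ) = 9 then -(9 / 10) else 1 / 10

/-- α₁ = (1/2, −1/2). -/
def α1 : Fin 2 → ℝ := fun i => if (i : ℕ) = 1 then -(1 / 2) else 1 / 2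

/-- α = (α₉, 2α₉, α₁). -/
def αvec : V := (α9, (2 : ℝ) • α9, α1)

/-- The overlattice Λ = L + ℤα. -/
def Λset : Set V := {v | ∃ m : ℤ, v - m • αvec ∈ Lset}

/-- The switching root r = (0, 0, 2α₁) = (0, 0, (1, −1)). -/
def rvec : V := (0, 0, (2 : ℝ) • α1)


lemma bd3 (c : ℤ) (h : c % 10 = 3) : -4*c + 21 ≤ c^2 := by
  have h2 : c ≤ -7 ∨ 3 ≤ c := by omega
  rcases h2 with h2 | h2 <;> nlinarith

lemma bd7 (c : ℤ) (h : c % 10 = 7) : 4*c + 21 ≤ c^2 := by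
  have h2 : c ≤ -3 ∨ 7 ≤ c := by omega
  rcases h2 with h2 | h2 <;> nlinarith

lemma bd6 (c : ℤ) (h : c % 10 = 6) : 2*c + 24 ≤ c^2 := by
  have h2 : c ≤ -4 ∨ 6 ≤ c := by omega
  rcases h2 with h2 | h2 <;> nlinarith

lemma bd4 (c : ℤ) (h : c % 10 = 4) : -2*c + 24 ≤ c^2 := by
  have h2 : c ≤ -6 ∨ 4 ≤ c := by omega
  rcases h2 with h2 | h2 <;> nlinarith

lemma sumbd (c : Fin 10 → ℤ) (a b : ℤ) (hcs : ∑ i, c i = 0)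
    (hb : ∀ i, a * c i + b ≤ (c i)^2) : 10 * b ≤ ∑ i, (c i)^2 := by
  have s1 := Finset.sum_le_sum (fun i (_ : i ∈ Finset.univ) => hb i)
  rw [Finset.sum_add_distrib, ← Finset.mul_sum, hcs] at s1
  simpa using s1

lemma core (m : ℤ) (c d : Fin 10 → ℤ)
    (hcm : ∀ i, c i % 10 = m % 10) (hdm : ∀ i, d i % 10 = (2*m) % 10)
    (hcs : ∑ i, c i = 0) (hds : ∑ i, d i = 0)
    (hsq : ∑ i, (c i)^2 + ∑ i, (d i)^2 = 250) (hodd : m % 2 = 1) :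
    m % 10 = 1 ∨ m % 10 = 9 ∨ m % 10 = 5 := by
  have h10 : m % 10 = 1 ∨ m % 10 = 3 ∨ m % 10 = 5 ∨ m % 10 = 7 ∨ m % 10 = 9 := by omega
  rcases h10 with h | h | h | h | h
  · tauto
  · exfalso
    have s1 := sumbd c (-4) 21 hcs (fun i => bd3 (c i) (by have := hcm i; omega))
    have s2 := sumbd d 2 24 hds (fun i => bd6 (d i) (by have := hdm i; omega))
    omega
  · tauto
  · exfalso
    have s1 := sumbd c 4 21 hcs (fun i => bd7 (c i) (by have := hcm i; omega))
    have s2 := sumbd d (-2) 24 hds (fun i => bd4 (d i) (by have := hdm i; omega))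
    omega
  · tauto

lemma val9 : ((9 : Fin 10) : ℕ) = 9 := rfl

/-- In Λ = (A₉ ⊕ A₉ ⊕ A₁) + ℤ(α₉, 2α₉, α₁), every vector γ with (γ,γ) = 3 and
(γ,r) = 1, where r = (0,0,2α₁), lies in L + mα for some m ≡ 1, −1 or 5 (mod 10);
equivalently X = X₁ ∪ X₋₁ ∪ X₅. -/
theorem stmt10 (γ : V) (hγ : γ ∈ Λset) (hnorm : ip γ γ = 3) (hinner : ip γ rvec = 1) :
    ∃ m : ℤ, γ - m • αvec ∈ Lset ∧
      (Int.ModEq 10 m 1 ∨ Int.ModEq 10 m (-1) ∨ Int.ModEq 10 m 5) := by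
  obtain ⟨m, hL⟩ := hγ
  refine ⟨m, hL, ?_⟩
  obtain ⟨⟨hx1, hx2⟩, ⟨hy1, hy2⟩, ⟨hz1, hz2⟩⟩ := hL
  choose x hx using hx1
  choose y hy using hy1
  choose z hz using hz1
  -- coordinates of γ
  have hγ1 : ∀ i, γ.1 i = x i + m * α9 i := by
    intro i
    have := hx i
    simp [αvec, sub_eq_iff_eq_add] at this
    exact this
  have hγ2 : ∀ i, γ.2.1 i = y i + m * (2 * α9 i) := by
    intro i
    have := hy i
    simp [αvec, sub_eq_iff_eq_add] at this
    rw [this]; ring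
  have hγ30 : γ.2.2 0 = z 0 + m * (1/2) := by
    have := hz 0
    simp [αvec, α1, sub_eq_iff_eq_add] at this
    linarith
  have hγ31 : γ.2.2 1 = z 1 - m * (1/2) := by
    have := hz 1
    simp [αvec, α1, sub_eq_iff_eq_add] at this
    linarith
  -- sums of integer parts
  have hxs : ∑ i, x i = 0 := by
    have : ∑ i, ((x i : ℝ)) = 0 := by
      rw [← hx2]; exact Finset.sum_congr rfl fun i _ => (hx i).symm
    exact_mod_cast this
  have hys : ∑ i, y i = 0 := by
    have : ∑ i, ((y i : ℝ)) = 0 := by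
      rw [← hy2]; exact Finset.sum_congr rfl fun i _ => (hy i).symm
    exact_mod_cast this
  have hzs : z 0 + z 1 = 0 := by
    have : ((z 0 : ℝ)) + z 1 = 0 := by
      rw [← hz 0, ← hz 1, ← Fin.sum_univ_two (f := fun i => (γ - m • αvec).2.2 i)]
      exact hz2
    exact_mod_cast this
  -- the inner product with r
  have hsub : γ.2.2 0 - γ.2.2 1 = 1 := by
    simp [ip, rvec, Fin.sum_univ_two, α1] at hinner
    linarith
  have hmz : 2 * z 0 + m = 1 := by
    have : ((2 * z 0 + m : ℤ) : ℝ) = 1 := by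
      push_cast
      have h0 : ((z 0 : ℝ)) + z 1 = 0 := by exact_mod_cast hzs
      rw [hγ30, hγ31] at hsub
      linarith
    exact_mod_cast this
  have hodd : m % 2 = 1 := by omega
  -- the scaled integer vectors
  set c : Fin 10 → ℤ := fun i => 10 * x i + m + (if i = (9 : Fin 10) then -(10*m) else 0) with hcdef
  set d : Fin 10 → ℤ := fun i => 10 * y i + 2*m + (if i = (9 : Fin 10) then -(20*m) else 0) with hddef
  have hc : ∀ i, ((c i : ℤ) : ℝ) = 10 * γ.1 i := by
    intro i
    show ((10 * x i + m + (if i = (9 : Fin 10) then -(10*m) else 0) : ℤ) : ℝ) = _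
    rw [hγ1 i]
    by_cases h : (i : ℕ) = 9
    · have h2 : i = (9 : Fin 10) := by omega
      simp [α9, h, h2, val9]; ring
    · have h2 : ¬ i = (9 : Fin 10) := fun hh => h (by rw [hh]; exact val9)
      simp [α9, h, h2]; ring
  have hd : ∀ i, ((d i : ℤ) : ℝ) = 10 * γ.2.1 i := by
    intro i
    show ((10 * y i + 2*m + (if i = (9 : Fin 10) then -(20*m) else 0) : ℤ) : ℝ) = _
    rw [hγ2 i]
    by_cases h : (i : ℕ) = 9
    · have h2 : i = (9 : Fin 10) := by omega
      simp [α9, h, h2, val9]; ring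
    · have h2 : ¬ i = (9 : Fin 10) := fun hh => h (by rw [hh]; exact val9)
      simp [α9, h, h2]; ring
  have hcm : ∀ i, c i % 10 = m % 10 := by
    intro i
    show (10 * x i + m + (if i = (9 : Fin 10) then -(10*m) else 0)) % 10 = m % 10
    split <;> omega
  have hdm : ∀ i, d i % 10 = (2*m) % 10 := by
    intro i
    show (10 * y i + 2*m + (if i = (9 : Fin 10) then -(20*m) else 0)) % 10 = (2*m) % 10
    split <;> omega
  have hcs : ∑ i, c i = 0 := by
    show ∑ i, (10 * x i + m + (if i = (9 : Fin 10) then -(10*m) else 0)) = 0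
    rw [Finset.sum_add_distrib, Finset.sum_add_distrib,
      Finset.sum_ite_eq' Finset.univ (9 : Fin 10) (fun _ => -(10*m))]
    simp [← Finset.mul_sum, hxs]
  have hds : ∑ i, d i = 0 := by
    show ∑ i, (10 * y i + 2*m + (if i = (9 : Fin 10) then -(20*m) else 0)) = 0
    rw [Finset.sum_add_distrib, Finset.sum_add_distrib,
      Finset.sum_ite_eq' Finset.univ (9 : Fin 10) (fun _ => -(20*m))]
    simp [← Finset.mul_sum, hys]; ring
  -- the norm condition
  have h30 : γ.2.2 0 = 1/2 := by
    rw [hγ30]; push_cast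
    have : ((2 * z 0 + m : ℤ) : ℝ) = 1 := by exact_mod_cast hmz
    push_cast at this; linarith
  have h31 : γ.2.2 1 = -(1/2) := by linarith
  have hS : (∑ t, γ.1 t * γ.1 t) + (∑ t, γ.2.1 t * γ.2.1 t) = 5/2 := by
    have := hnorm
    simp only [ip, Fin.sum_univ_two] at this
    rw [h30, h31] at this
    linarith
  have hsq : ∑ i, (c i)^2 + ∑ i, (d i)^2 = 250 := by
    have hc2 : ((∑ i, (c i)^2 : ℤ) : ℝ) = 100 * ∑ t, γ.1 t * γ.1 t := by
      push_cast
      rw [Finset.mul_sum]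
      exact Finset.sum_congr rfl fun i _ => by rw [hc i]; ring
    have hd2 : ((∑ i, (d i)^2 : ℤ) : ℝ) = 100 * ∑ t, γ.2.1 t * γ.2.1 t := by
      push_cast
      rw [Finset.mul_sum]
      exact Finset.sum_congr rfl fun i _ => by rw [hd i]; ring
    have : ((∑ i, (c i)^2 + ∑ i, (d i)^2 : ℤ) : ℝ) = 250 := by
      push_cast
      push_cast at hc2 hd2
      rw [hc2, hd2]; linarith
    exact_mod_cast this
  have := core m c d hcm hdm hcs hds hsq hodd
  unfold Int.ModEq
  omega


end
end

section
/- The coset mα + L, where α = (α_9, 2α_9, α_1) and L = A_9⊕A_9⊕A_1, has minimum squared norm at least 5 when m ≡ ±3 (mod 10) and exactly 3 when m ≡ ±1 or 5 (mod 10). -/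
/-!
If `g` is the glue vector of `A_{N-1} ⊂ ℝ^N`, every coordinate of a vector `c` in the coset
`m • g + A_{N-1}` is `≡ t := (m mod N)/N (mod 1)` and the coordinates sum to `0`. Writing
`c i = t + z i` with `z i ∈ ℤ` gives `∑ z i = -N t` and
`∑ c i ^ 2 - N t (1 - t) = ∑ z i (z i + 1) ≥ 0`, with equality when `N t` of the `z i` are `-1` and the others `0`. So the minimal squared norm
of `m α + L` is the sum of the component minima `r (N - r) / N` at the residues `r` of `m`, `2 m`
(mod 10) and `m` (mod 2); it depends only on `m mod 10`, and is `5` for `m ≡ ±3` and `3` for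
`m ≡ ±1, 5`.
-/

noncomputable section

def rootLatticeA (N : ℕ) : Set (Fin N → ℝ) :=
  {x | (∀ i, ∃ z : ℤ, x i = (z : ℝ)) ∧ ∑ i, x i = 0}

def minSqNormA (N : ℕ) (m : ℤ) : ℝ := ((m % N : ℤ) : ℝ) * (N - (m % N : ℤ)) / N

theorem card_mul_mul_one_sub_le_sum_sq {ι : Type*} [Fintype ι] (t : ℝ) (c : ι → ℝ)
    (hc : ∀ i, ∃ z : ℤ, c i = t + z) (hs : ∑ i, c i = 0) :
    Fintype.card ι * t * (1 - t) ≤ ∑ i, c i ^ 2 := by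
  choose z hz using hc
  have hz_sum : ∑ i, (z i : ℝ) = -(Fintype.card ι * t) := by
    simp only [hz, Finset.sum_add_distrib, Finset.sum_const, Finset.card_univ,
      nsmul_eq_mul] at hs
    linarith
  calc Fintype.card ι * t * (1 - t) = ∑ i, (t ^ 2 + (2 * t - 1) * z i) := by
        rw [Finset.sum_add_distrib, ← Finset.mul_sum, hz_sum, Finset.sum_const,
          Finset.card_univ, nsmul_eq_mul]
        ring
    _ ≤ ∑ i, c i ^ 2 := Finset.sum_le_sum fun i _ => by
        have hz_mul : (0 : ℝ) ≤ z i * (z i + 1) := by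
          exact_mod_cast (le_or_gt 0 (z i)).elim (fun h => by nlinarith) fun h => by nlinarith
        rw [hz i]
        nlinarith

theorem Fin.sum_ite_lt {M : Type*} [AddCommMonoid M] {N k : ℕ} (hk : k ≤ N) (a b : M) :
    ∑ i : Fin N, (if (i : ℕ) < k then a else b) = k • a + (N - k) • b := by
  rw [Fin.sum_univ_eq_sum_range (fun i => if i < k then a else b),
    ← Finset.sum_range_add_sum_Ico _ hk,
    Finset.sum_congr rfl fun i hi => if_pos (Finset.mem_range.mp hi),
    Finset.sum_congr rfl fun i hi => if_neg (Finset.mem_Ico.mp hi).1.not_gt]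
  simp

section GlueA

variable {N : ℕ} [NeZero N] {g : Fin N → ℝ}

theorem exists_zsmul_apply_eq_emod_add_int (hg : ∀ i, ∃ z : ℤ, g i = 1 / N + z) (m : ℤ)
    (i : Fin N) : ∃ z : ℤ, (m • g) i = ((m % N : ℤ) : ℝ) / N + z := by
  obtain ⟨z, hz⟩ := hg i
  have hN : (N : ℝ) ≠ 0 := Nat.cast_ne_zero.mpr (NeZero.ne N)
  have hm : (m : ℝ) = (m % N : ℤ) + N * (m / N : ℤ) := by
    exact_mod_cast (Int.emod_add_mul_ediv m N).symm
  refine ⟨m / N + m * z, ?_⟩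
  rw [Pi.smul_apply, zsmul_eq_mul, hz]
  push_cast
  field_simp
  rw [hm]
  ring

omit [NeZero N] in
theorem sum_zsmul_apply_eq_zero (hg_sum : ∑ i, g i = 0) (m : ℤ) : ∑ i, (m • g) i = 0 := by
  simp [← Finset.mul_sum, hg_sum]

theorem minSqNormA_le_sum_sq (hg : ∀ i, ∃ z : ℤ, g i = 1 / N + z) (hg_sum : ∑ i, g i = 0)
    {m : ℤ} {x : Fin N → ℝ} (hx : x - m • g ∈ rootLatticeA N) :
    minSqNormA N m ≤ ∑ i, x i ^ 2 := by
  obtain ⟨hx_int, hx_sum⟩ := hx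
  have hx_coord (i : Fin N) : ∃ z : ℤ, x i = ((m % N : ℤ) : ℝ) / N + z := by
    obtain ⟨z, hz⟩ := hx_int i
    obtain ⟨w, hw⟩ := exists_zsmul_apply_eq_emod_add_int hg m i
    rw [Pi.sub_apply, hw] at hz
    exact ⟨w + z, by push_cast; linarith⟩
  have hx_sum' : ∑ i, x i = 0 := by
    simpa only [Pi.sub_apply, Finset.sum_sub_distrib, sum_zsmul_apply_eq_zero hg_sum,
      sub_zero] using hx_sum
  have hN : (N : ℝ) ≠ 0 := Nat.cast_ne_zero.mpr (NeZero.ne N)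
  calc minSqNormA N m
      = N * (((m % N : ℤ) : ℝ) / N) * (1 - ((m % N : ℤ) : ℝ) / N) := by
        unfold minSqNormA; field_simp
    _ ≤ ∑ i, x i ^ 2 := by
        simpa only [Fintype.card_fin] using
          card_mul_mul_one_sub_le_sum_sq _ x hx_coord hx_sum'

theorem exists_sum_sq_eq_minSqNormA (hg : ∀ i, ∃ z : ℤ, g i = 1 / N + z)
    (hg_sum : ∑ i, g i = 0) (m : ℤ) :
    ∃ x : Fin N → ℝ, x - m • g ∈ rootLatticeA N ∧ ∑ i, x i ^ 2 = minSqNormA N m := by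
  obtain ⟨r, hr⟩ :=
    Int.eq_ofNat_of_zero_le (Int.emod_nonneg m (Int.natCast_ne_zero.mpr (NeZero.ne N)))
  have hrN : r ≤ N := by
    have := Int.emod_lt_of_pos m (Int.natCast_pos.mpr (NeZero.pos N))
    omega
  have hN : (N : ℝ) ≠ 0 := Nat.cast_ne_zero.mpr (NeZero.ne N)
  set t : ℝ := r / N
  refine ⟨fun i => if (i : ℕ) < r then t - 1 else t, ⟨fun i => ?_, ?_⟩, ?_⟩
  · obtain ⟨w, hw⟩ := exists_zsmul_apply_eq_emod_add_int hg m i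
    rw [Pi.sub_apply, hw, hr]
    split_ifs
    · exact ⟨-1 - w, by push_cast; ring⟩
    · exact ⟨-w, by push_cast; ring⟩
  · simp only [Pi.sub_apply, Finset.sum_sub_distrib, sum_zsmul_apply_eq_zero hg_sum,
      Fin.sum_ite_lt hrN, nsmul_eq_mul, Nat.cast_sub hrN, t]
    field_simp
    ring
  · simp only [apply_ite (· ^ 2), Fin.sum_ite_lt hrN, nsmul_eq_mul,
      Nat.cast_sub hrN, minSqNormA, hr, t]
    field_simp
    push_cast
    ring

end GlueA

theorem α9_eq_add_int (i : Fin 10) : ∃ z : ℤ, α9 i = 1 / (10 : ℕ) + z := by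
  by_cases h : (i : ℕ) = 9
  · exact ⟨-1, by norm_num [α9, h]⟩
  · exact ⟨0, by simp [α9, h]⟩

theorem sum_α9 : ∑ i, α9 i = 0 := by
  norm_num [Fin.sum_univ_succ, α9]

theorem α1_eq_add_int (i : Fin 2) : ∃ z : ℤ, α1 i = 1 / (2 : ℕ) + z := by
  by_cases h : (i : ℕ) = 1
  · exact ⟨-1, by norm_num [α1, h]⟩
  · exact ⟨0, by simp [α1, h]⟩

theorem sum_α1 : ∑ i, α1 i = 0 := by
  simp [Fin.sum_univ_succ, α1]

theorem sub_zsmul_αvec_mem_Lset_iff (m : ℤ) (v : V) :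
    v - m • αvec ∈ Lset ↔ v.1 - m • α9 ∈ rootLatticeA 10 ∧
      v.2.1 - (2 * m) • α9 ∈ rootLatticeA 10 ∧ v.2.2 - m • α1 ∈ rootLatticeA 2 := by
  have h2 : m • (2 : ℝ) • α9 = (2 * m) • α9 := by
    ext i
    simp only [Pi.smul_apply, zsmul_eq_mul, smul_eq_mul, Int.cast_mul, Int.cast_ofNat]
    ring
  show (v - m • αvec).1 ∈ A9 ∧ (v - m • αvec).2.1 ∈ A9 ∧ (v - m • αvec).2.2 ∈ A1 ↔ _
  simp only [αvec, Prod.fst_sub, Prod.snd_sub, Prod.smul_fst, Prod.smul_snd, h2]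
  rfl

theorem ip_self (v : V) :
    ip v v = ∑ i, v.1 i ^ 2 + ∑ i, v.2.1 i ^ 2 + ∑ i, v.2.2 i ^ 2 := by
  simp only [ip, sq]

def minSqNormL (m : ℤ) : ℝ := minSqNormA 10 m + minSqNormA 10 (2 * m) + minSqNormA 2 m

theorem minSqNormL_le_ip_self {m : ℤ} {v : V} (hv : v - m • αvec ∈ Lset) :
    minSqNormL m ≤ ip v v := by
  obtain ⟨h₁, h₂, h₃⟩ := (sub_zsmul_αvec_mem_Lset_iff m v).mp hv
  rw [ip_self, minSqNormL]
  gcongr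
  · exact minSqNormA_le_sum_sq α9_eq_add_int sum_α9 h₁
  · exact minSqNormA_le_sum_sq α9_eq_add_int sum_α9 h₂
  · exact minSqNormA_le_sum_sq α1_eq_add_int sum_α1 h₃

theorem exists_ip_self_eq_minSqNormL (m : ℤ) :
    ∃ v : V, v - m • αvec ∈ Lset ∧ ip v v = minSqNormL m := by
  obtain ⟨x₁, h₁, e₁⟩ := exists_sum_sq_eq_minSqNormA α9_eq_add_int sum_α9 m
  obtain ⟨x₂, h₂, e₂⟩ := exists_sum_sq_eq_minSqNormA α9_eq_add_int sum_α9 (2 * m)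
  obtain ⟨x₃, h₃, e₃⟩ := exists_sum_sq_eq_minSqNormA α1_eq_add_int sum_α1 m
  exact ⟨(x₁, x₂, x₃), (sub_zsmul_αvec_mem_Lset_iff m _).mpr ⟨h₁, h₂, h₃⟩,
    by rw [ip_self, e₁, e₂, e₃, minSqNormL]⟩

theorem minSqNormL_emod_ten (m : ℤ) : minSqNormL (m % 10) = minSqNormL m := by
  have h₁ : m % 10 % (10 : ℕ) = m % (10 : ℕ) := by omega
  have h₂ : 2 * (m % 10) % (10 : ℕ) = 2 * m % (10 : ℕ) := by omega
  have h₃ : m % 10 % (2 : ℕ) = m % (2 : ℕ) := by omega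
  simp only [minSqNormL, minSqNormA, h₁, h₂, h₃]

/-- The coset mα + L, where α = (α₉, 2α₉, α₁) and L = A₉⊕A₉⊕A₁, has minimum
squared norm at least 5 when m ≡ ±3 (mod 10) and exactly 3 when m ≡ ±1 or 5 (mod 10). -/
theorem stmt11 (m : ℤ) :
    ((Int.ModEq 10 m 3 ∨ Int.ModEq 10 m (-3)) →
      ∀ v : V, v - m • αvec ∈ Lset → 5 ≤ ip v v) ∧
    ((Int.ModEq 10 m 1 ∨ Int.ModEq 10 m (-1) ∨ Int.ModEq 10 m 5) →
      (∀ v : V, v - m • αvec ∈ Lset → 3 ≤ ip v v) ∧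
      (∃ v : V, v - m • αvec ∈ Lset ∧ ip v v = 3)) := by
  refine ⟨fun h v hv => ?_, fun h => ?_⟩
  · have hr : m % 10 = 3 ∨ m % 10 = 7 := by unfold Int.ModEq at h; omega
    have hmin : minSqNormL m = 5 := by
      rcases hr with hr | hr <;>
        rw [← minSqNormL_emod_ten, hr] <;> norm_num [minSqNormL, minSqNormA]
    exact hmin ▸ minSqNormL_le_ip_self hv
  · have hr : m % 10 = 1 ∨ m % 10 = 9 ∨ m % 10 = 5 := by unfold Int.ModEq at h; omega
    have hmin : minSqNormL m = 3 := by
      rcases hr with hr | hr | hr <;>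
        rw [← minSqNormL_emod_ten, hr] <;> norm_num [minSqNormL, minSqNormA]
    exact ⟨fun v hv => hmin ▸ minSqNormL_le_ip_self hv, hmin ▸ exists_ip_self_eq_minSqNormL m⟩

end
end

section
/- For every nonnegative integer n, the number of tuples (Y_1, …, Y_{2n}) of pairwise disjoint matchings of the complete graph K_{2n} whose union is the full edge set is at least (2n−1)! · F(n) · T(2n), where F(n) is the number of ordered-as-sets 1-factorizations of K_{2n} and T(2n) is the number of matchings of K_{2n}. -/
/-- A matching of the complete graph on `Fin m`: a set of non-loop edges that are pairwise
vertex-disjoint. -/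
def IsMatching (m : ℕ) (M : Finset (Sym2 (Fin m))) : Prop :=
  (∀ e ∈ M, ¬ e.IsDiag) ∧
  ∀ e ∈ M, ∀ e' ∈ M, e ≠ e' → ∀ v : Fin m, v ∈ e → v ∉ e'

/-- The edge set of the complete graph on `Fin m`. -/
def allEdges (m : ℕ) : Finset (Sym2 (Fin m)) :=
  Finset.univ.filter (fun e => ¬ e.IsDiag)

/-- A perfect matching of the complete graph on `Fin m`. -/
def IsPerfectMatching (m : ℕ) (M : Finset (Sym2 (Fin m))) : Prop :=
  IsMatching m M ∧ ∀ v : Fin m, ∃ e ∈ M, v ∈ e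

lemma isMatching_subset {m : ℕ} {A B : Finset (Sym2 (Fin m))} (hA : IsMatching m A)
    (hBA : B ⊆ A) : IsMatching m B :=
  ⟨fun e he => hA.1 e (hBA he),
   fun e he e' he' hne v hv => hA.2 e (hBA he) e' (hBA he') hne v hv⟩

/-- Recovery lemma: a perfect matching is determined by its part outside a matching `M`. -/
lemma pm_recover {m : ℕ} {P P' M : Finset (Sym2 (Fin m))} (hP : IsPerfectMatching m P)
    (hP' : IsPerfectMatching m P') (hM : IsMatching m M)
    (h : P \ M = P' \ M) : P ⊆ P' := by
  intro e he
  by_cases heM : e ∈ M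
  · have hue : e.out.1 ∈ e := Sym2.out_fst_mem e
    obtain ⟨e', he', hue'⟩ := hP'.2 e.out.1
    by_cases he'M : e' ∈ M
    · have hee : e = e' := by
        by_contra hne
        exact hM.2 e heM e' he'M hne e.out.1 hue hue'
      exact hee ▸ he'
    · have h1 : e' ∈ P' \ M := Finset.mem_sdiff.2 ⟨he', he'M⟩
      rw [← h] at h1
      have h2 := (Finset.mem_sdiff.1 h1).1
      have hne : e ≠ e' := fun hh => he'M (hh ▸ heM)
      exact absurd hue' (hP.1.2 e he e' h2 hne e.out.1 hue)
  · have h1 : e ∈ P \ M := Finset.mem_sdiff.2 ⟨he, heM⟩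
    rw [h] at h1
    exact (Finset.mem_sdiff.1 h1).1

/-- An ordering of a 1-factorization `S` twisted by a permutation `σ`. -/
noncomputable def ford (n : ℕ) (S : Finset (Finset (Sym2 (Fin (2 * n)))))
    (hS : S.card = 2 * n - 1) (σ : Equiv.Perm (Fin (2 * n - 1))) :
    Fin (2 * n - 1) → Finset (Sym2 (Fin (2 * n))) :=
  fun i => ((Finset.equivFinOfCardEq hS).symm (σ i) : {x // x ∈ S}).1

lemma ford_mem {n : ℕ} {S : Finset (Finset (Sym2 (Fin (2 * n))))}
    (hS : S.card = 2 * n - 1) (σ : Equiv.Perm (Fin (2 * n - 1))) (i : Fin (2 * n - 1)) :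
    ford n S hS σ i ∈ S :=
  ((Finset.equivFinOfCardEq hS).symm (σ i)).2

lemma ford_inj {n : ℕ} {S : Finset (Finset (Sym2 (Fin (2 * n))))}
    (hS : S.card = 2 * n - 1) (σ : Equiv.Perm (Fin (2 * n - 1))) :
    Function.Injective (ford n S hS σ) := by
  intro i j h
  simp only [ford] at h
  exact σ.injective ((Finset.equivFinOfCardEq hS).symm.injective (Subtype.ext h))

lemma ford_surj {n : ℕ} {S : Finset (Finset (Sym2 (Fin (2 * n))))}
    (hS : S.card = 2 * n - 1) (σ : Equiv.Perm (Fin (2 * n - 1))) :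
    ∀ s ∈ S, ∃ i, ford n S hS σ i = s := by
  have himage : Finset.image (ford n S hS σ) Finset.univ = S := by
    apply Finset.eq_of_subset_of_card_le
    · intro s hs
      obtain ⟨i, -, rfl⟩ := Finset.mem_image.1 hs
      exact ford_mem hS σ i
    · rw [Finset.card_image_of_injective _ (ford_inj hS σ), Finset.card_univ, Fintype.card_fin,
        hS]
  intro s hs
  rw [← himage] at hs
  obtain ⟨i, -, hi⟩ := Finset.mem_image.1 hs
  exact ⟨i, hi⟩

lemma ford_eq {n : ℕ} {S : Finset (Finset (Sym2 (Fin (2 * n))))}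
    (h1 h2 : S.card = 2 * n - 1) (σ σ' : Equiv.Perm (Fin (2 * n - 1)))
    (h : ford n S h1 σ = ford n S h2 σ') : σ = σ' := by
  have h12 : h1 = h2 := rfl
  subst h12
  ext i
  have h3 := congrFun h i
  simp only [ford] at h3
  have h4 := (Finset.equivFinOfCardEq h1).symm.injective (Subtype.ext h3)
  exact congrArg Fin.val (σ.injective.eq_iff.mpr rfl ▸ h4)

/-- The tuple of matchings built from an ordered 1-factorization `f` and a matching `M`. -/
def buildY (n : ℕ) (f : Fin (2 * n - 1) → Finset (Sym2 (Fin (2 * n))))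
    (M : Finset (Sym2 (Fin (2 * n)))) : Fin (2 * n) → Finset (Sym2 (Fin (2 * n))) :=
  fun i => if h : (i : ℕ) < 2 * n - 1 then f ⟨i, h⟩ \ M else M

lemma buildY_mem (n : ℕ) (hn : 0 < n) (f : Fin (2 * n - 1) → Finset (Sym2 (Fin (2 * n))))
    (M : Finset (Sym2 (Fin (2 * n))))
    (hpm : ∀ i, IsPerfectMatching (2 * n) (f i))
    (hdisj : ∀ i j, i ≠ j → Disjoint (f i) (f j))
    (hcov : Finset.univ.biUnion f = allEdges (2 * n))
    (hM : IsMatching (2 * n) M) :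
    (∀ i, IsMatching (2 * n) (buildY n f M i)) ∧
    (∀ i j, i ≠ j → Disjoint (buildY n f M i) (buildY n f M j)) ∧
    Finset.univ.biUnion (buildY n f M) = allEdges (2 * n) := by
  refine ⟨?_, ?_, ?_⟩
  · intro i
    unfold buildY
    split_ifs with h
    · exact isMatching_subset (hpm _).1 Finset.sdiff_subset
    · exact hM
  · intro i j hne
    unfold buildY
    split_ifs with h1 h2 h2
    · refine Finset.disjoint_of_subset_left Finset.sdiff_subset
        (Finset.disjoint_of_subset_right Finset.sdiff_subset (hdisj _ _ ?_))
      intro hh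
      apply hne
      have h3 : (i : ℕ) = (j : ℕ) := by simpa using congrArg Fin.val hh
      exact Fin.ext h3
    · exact Finset.sdiff_disjoint
    · exact Finset.sdiff_disjoint.symm
    · refine absurd (Fin.ext ?_) hne
      have hi := i.isLt
      have hj := j.isLt
      omega
  · ext e
    simp only [Finset.mem_biUnion, Finset.mem_univ, true_and]
    constructor
    · rintro ⟨i, hi⟩
      unfold buildY at hi
      split_ifs at hi with h
      · have h1 : e ∈ f ⟨i, h⟩ := (Finset.mem_sdiff.1 hi).1
        rw [← hcov]
        exact Finset.mem_biUnion.2 ⟨⟨i, h⟩, Finset.mem_univ _, h1⟩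
      · simp only [allEdges, Finset.mem_filter, Finset.mem_univ, true_and]
        exact hM.1 e hi
    · intro he
      have he' : e ∈ Finset.univ.biUnion f := by rw [hcov]; exact he
      obtain ⟨a, -, ha⟩ := Finset.mem_biUnion.1 he'
      by_cases heM : e ∈ M
      · refine ⟨⟨2 * n - 1, by omega⟩, ?_⟩
        unfold buildY
        rw [dif_neg (Nat.lt_irrefl _)]
        exact heM
      · refine ⟨⟨(a : ℕ), by have := a.isLt; omega⟩, ?_⟩
        unfold buildY
        rw [dif_pos a.isLt]
        exact Finset.mem_sdiff.2 ⟨ha, heM⟩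

lemma buildY_inj (n : ℕ) (hn : 0 < n) (f f' : Fin (2 * n - 1) → Finset (Sym2 (Fin (2 * n))))
    (M M' : Finset (Sym2 (Fin (2 * n))))
    (hpm : ∀ i, IsPerfectMatching (2 * n) (f i))
    (hpm' : ∀ i, IsPerfectMatching (2 * n) (f' i))
    (hM : IsMatching (2 * n) M)
    (h : buildY n f M = buildY n f' M') : f = f' ∧ M = M' := by
  have hMM : M = M' := by
    have h0 := congrFun h ⟨2 * n - 1, by omega⟩
    unfold buildY at h0
    rw [dif_neg (Nat.lt_irrefl _), dif_neg (Nat.lt_irrefl _)] at h0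
    exact h0
  subst hMM
  refine ⟨funext fun a => ?_, rfl⟩
  have h0 := congrFun h ⟨(a : ℕ), by have := a.isLt; omega⟩
  unfold buildY at h0
  rw [dif_pos a.isLt, dif_pos a.isLt] at h0
  exact Finset.Subset.antisymm (pm_recover (hpm a) (hpm' a) hM h0)
    (pm_recover (hpm' a) (hpm a) hM h0.symm)

/-- For every nonnegative integer n, the number of tuples (Y₁, …, Y₂ₙ) of
pairwise disjoint matchings of K₂ₙ whose union is the full edge set is at least
(2n−1)!·F(n)·T(2n), where F(n) is the number of 1-factorizations of K₂ₙ (as sets of perfect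
matchings) and T(2n) is the number of matchings of K₂ₙ. -/
theorem stmt15 (n : ℕ) :
    (2 * n - 1).factorial *
      Set.ncard {S : Finset (Finset (Sym2 (Fin (2 * n)))) |
        S.card = 2 * n - 1 ∧ (∀ M ∈ S, IsPerfectMatching (2 * n) M) ∧
        (S : Set (Finset (Sym2 (Fin (2 * n))))).Pairwise Disjoint ∧
        S.biUnion id = allEdges (2 * n)} *
      Set.ncard {M : Finset (Sym2 (Fin (2 * n))) | IsMatching (2 * n) M}
    ≤ Set.ncard {Y : Fin (2 * n) → Finset (Sym2 (Fin (2 * n))) |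
        (∀ i, IsMatching (2 * n) (Y i)) ∧
        (∀ i j, i ≠ j → Disjoint (Y i) (Y j)) ∧
        Finset.univ.biUnion Y = allEdges (2 * n)} := by
  classical
  obtain rfl | hn := Nat.eq_zero_or_pos n
  · -- the degenerate case n = 0
    haveI hFempty : IsEmpty (Fin (2 * 0)) :=
      ⟨fun i => absurd i.isLt (by omega)⟩
    haveI hSempty : IsEmpty (Sym2 (Fin (2 * 0))) := by
      constructor
      intro e
      induction e using Sym2.ind with
      | _ x y => exact isEmptyElim x
    have hfin : ∀ A : Finset (Sym2 (Fin (2 * 0))), A = ∅ := fun A =>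
      Finset.eq_empty_of_forall_notMem fun x _ => isEmptyElim x
    have hAll : allEdges (2 * 0) = ∅ := hfin _
    have hT : {M : Finset (Sym2 (Fin (2 * 0))) | IsMatching (2 * 0) M} = {∅} := by
      ext M
      simp only [Set.mem_setOf_eq, Set.mem_singleton_iff]
      constructor
      · intro _; exact hfin M
      · rintro rfl
        exact ⟨fun e he => absurd he (Finset.notMem_empty e),
          fun e he => absurd he (Finset.notMem_empty e)⟩
    have hS : {S : Finset (Finset (Sym2 (Fin (2 * 0)))) |
        S.card = 2 * 0 - 1 ∧ (∀ M ∈ S, IsPerfectMatching (2 * 0) M) ∧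
        (S : Set (Finset (Sym2 (Fin (2 * 0))))).Pairwise Disjoint ∧
        S.biUnion id = allEdges (2 * 0)} = {∅} := by
      ext S
      simp only [Set.mem_setOf_eq, Set.mem_singleton_iff]
      constructor
      · rintro ⟨hc, -, -, -⟩
        exact Finset.card_eq_zero.1 (by simpa using hc)
      · rintro rfl
        refine ⟨by simp, by simp, by simp, by simp [hAll]⟩
    have hY : {Y : Fin (2 * 0) → Finset (Sym2 (Fin (2 * 0))) |
        (∀ i, IsMatching (2 * 0) (Y i)) ∧
        (∀ i j, i ≠ j → Disjoint (Y i) (Y j)) ∧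
        Finset.univ.biUnion Y = allEdges (2 * 0)} = {fun _ => ∅} := by
      ext Y
      simp only [Set.mem_setOf_eq, Set.mem_singleton_iff]
      constructor
      · intro _
        funext i
        exact isEmptyElim i
      · rintro rfl
        refine ⟨fun i => isEmptyElim i, fun i j _ => isEmptyElim i, ?_⟩
        rw [Finset.univ_eq_empty]
        simp [hAll]
    rw [hT, hS, hY, Set.ncard_singleton, Set.ncard_singleton, Set.ncard_singleton]
    simp
  · -- the main case n ≥ 1
    have e1 : (2 * n - 1).factorial = Nat.card (Equiv.Perm (Fin (2 * n - 1))) := by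
      rw [Nat.card_eq_fintype_card, Fintype.card_perm, Fintype.card_fin]
    rw [e1, ← Nat.card_coe_set_eq, ← Nat.card_coe_set_eq, ← Nat.card_coe_set_eq,
      ← Nat.card_prod, ← Nat.card_prod]
    have hmem : ∀ (σ : Equiv.Perm (Fin (2 * n - 1)))
        (S : {S : Finset (Finset (Sym2 (Fin (2 * n)))) |
          S.card = 2 * n - 1 ∧ (∀ M ∈ S, IsPerfectMatching (2 * n) M) ∧
          (S : Set (Finset (Sym2 (Fin (2 * n))))).Pairwise Disjoint ∧
          S.biUnion id = allEdges (2 * n)})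
        (M : {M : Finset (Sym2 (Fin (2 * n))) | IsMatching (2 * n) M}),
        buildY n (ford n S.1 S.2.1 σ) M.1 ∈
          {Y : Fin (2 * n) → Finset (Sym2 (Fin (2 * n))) |
            (∀ i, IsMatching (2 * n) (Y i)) ∧
            (∀ i j, i ≠ j → Disjoint (Y i) (Y j)) ∧
            Finset.univ.biUnion Y = allEdges (2 * n)} := by
      intro σ S M
      obtain ⟨S, hc, hpm, hdis, hcov⟩ := S
      refine buildY_mem n hn _ _ ?_ ?_ ?_ M.2
      · exact fun i => hpm _ (ford_mem hc σ i)
      · intro i j hij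
        exact hdis (ford_mem hc σ i) (ford_mem hc σ j) fun hh => hij (ford_inj hc σ hh)
      · show Finset.univ.biUnion (ford n S hc σ) = allEdges (2 * n)
        rw [← hcov]
        ext e
        simp only [Finset.mem_biUnion, Finset.mem_univ, true_and, id_eq]
        constructor
        · rintro ⟨i, hi⟩
          exact ⟨ford n S hc σ i, ford_mem hc σ i, hi⟩
        · rintro ⟨s, hs, hes⟩
          obtain ⟨i, rfl⟩ := ford_surj hc σ s hs
          exact ⟨i, hes⟩
    apply Nat.card_le_card_of_injective
      (fun x : (Equiv.Perm (Fin (2 * n - 1)) ×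
          {S : Finset (Finset (Sym2 (Fin (2 * n)))) |
            S.card = 2 * n - 1 ∧ (∀ M ∈ S, IsPerfectMatching (2 * n) M) ∧
            (S : Set (Finset (Sym2 (Fin (2 * n))))).Pairwise Disjoint ∧
            S.biUnion id = allEdges (2 * n)}) ×
          {M : Finset (Sym2 (Fin (2 * n))) | IsMatching (2 * n) M} =>
        (⟨buildY n (ford n x.1.2.1 x.1.2.2.1 x.1.1) x.2.1, hmem x.1.1 x.1.2 x.2⟩ :
          {Y : Fin (2 * n) → Finset (Sym2 (Fin (2 * n))) |
            (∀ i, IsMatching (2 * n) (Y i)) ∧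
            (∀ i j, i ≠ j → Disjoint (Y i) (Y j)) ∧
            Finset.univ.biUnion Y = allEdges (2 * n)}))
    rintro ⟨⟨σ, S, hS⟩, M, hM⟩ ⟨⟨σ', S', hS'⟩, M', hM'⟩ h
    have h' := congrArg Subtype.val h
    simp only at h'
    obtain ⟨hfe, hMe⟩ := buildY_inj n hn _ _ _ _
      (fun i => hS.2.1 _ (ford_mem hS.1 σ i))
      (fun i => hS'.2.1 _ (ford_mem hS'.1 σ' i)) hM h'
    have hSS : S = S' := by
      ext s
      constructor
      · intro hs
        obtain ⟨i, hi⟩ := ford_surj hS.1 σ s hs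
        rw [← hi, congrFun hfe i]
        exact ford_mem hS'.1 σ' i
      · intro hs
        obtain ⟨i, hi⟩ := ford_surj hS'.1 σ' s hs
        rw [← hi, ← congrFun hfe i]
        exact ford_mem hS.1 σ i
    subst hSS
    subst hMe
    have hσ : σ = σ' := ford_eq hS.1 hS'.1 σ σ' hfe
    subst hσ
    rfl
end

section
/- The map sending a pair consisting of an ordered 1-factorization (M_1,…,M_{2n−1}) of K_{2n} and a matching M_{2n} of K_{2n} to the tuple ((M_1∖M_{2n}, …, M_{2n−1}∖M_{2n}), M_{2n}) is injective. -/

lemma key_sub (m : ℕ) (A B M : Finset (Sym2 (Fin m)))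
    (hA : IsMatching m A) (hB : IsPerfectMatching m B) (hM : IsMatching m M)
    (hd : A \ M = B \ M) : A ⊆ B := by
  intro e he
  by_cases hem : e ∈ M
  · induction e using Sym2.ind with
    | _ u v =>
      obtain ⟨e', he'B, hue'⟩ := hB.2 u
      by_cases h' : e' ∈ M
      · have heq : s(u, v) = e' := by
          by_contra hne
          exact hM.2 _ hem e' h' hne u (Sym2.mem_mk_left u v) hue'
        rwa [heq]
      · have : e' ∈ A \ M := by rw [hd]; exact Finset.mem_sdiff.2 ⟨he'B, h'⟩
        have he'A : e' ∈ A := (Finset.mem_sdiff.1 this).1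
        have hne : s(u, v) ≠ e' := by rintro rfl; exact h' hem
        exact absurd hue' (hA.2 _ he e' he'A hne u (Sym2.mem_mk_left u v))
  · have : e ∈ B \ M := by rw [← hd]; exact Finset.mem_sdiff.2 ⟨he, hem⟩
    exact (Finset.mem_sdiff.1 this).1

/-- The map sending a pair consisting of an ordered 1-factorization
(M₁,…,M₂ₙ₋₁) of K₂ₙ and a matching M₂ₙ of K₂ₙ to ((M₁∖M₂ₙ, …, M₂ₙ₋₁∖M₂ₙ), M₂ₙ) is
injective. -/
theorem stmt16 (n : ℕ) :
    Set.InjOn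
      (fun p : (Fin (2 * n - 1) → Finset (Sym2 (Fin (2 * n)))) × Finset (Sym2 (Fin (2 * n))) =>
        ((fun i => p.1 i \ p.2), p.2))
      {p | (∀ i, IsPerfectMatching (2 * n) (p.1 i)) ∧
        (∀ i j, i ≠ j → Disjoint (p.1 i) (p.1 j)) ∧
        Finset.univ.biUnion p.1 = allEdges (2 * n) ∧
        IsMatching (2 * n) p.2} := by
  rintro ⟨F, M⟩ ⟨hF, -, -, hM⟩ ⟨F', M'⟩ ⟨hF', -, -, hM'⟩ h
  simp only [Prod.mk.injEq] at h
  obtain ⟨h1, rfl⟩ := h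
  refine Prod.ext ?_ rfl
  funext i
  have hd : F i \ M = F' i \ M := congrFun h1 i
  exact Finset.Subset.antisymm
    (key_sub _ _ _ _ (hF i).1 (hF' i) hM hd)
    (key_sub _ _ _ _ (hF' i).1 (hF i) hM hd.symm)
end

section
/- Let (Y_1, …, Y_{10}) be pairwise disjoint matchings of K_{10} whose union is the full edge set. Set E_+ = Y_1 ∪ Y_2 ∪ Y_3 ∪ Y_4 and E_- = Y_5 ∪ ... ∪ Y_{10}. Define a graph G on vertex set [10] with an edge {j, j'} whenever there exists k with both {j,k} and {j',k} in E_+, or both in E_-. Then G is connected. -/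
lemma even_card_of_fpf_invol {α : Type*} [DecidableEq α] (g : α → α) :
    ∀ (C : Finset α), (∀ v ∈ C, g v ∈ C ∧ g v ≠ v ∧ g (g v) = v) → Even C.card := by
  intro C
  induction C using Finset.strongInduction with
  | _ C ih =>
    intro h
    rcases C.eq_empty_or_nonempty with rfl | ⟨v, hv⟩
    · simp
    · obtain ⟨hg1, hg2, hg3⟩ := h v hv
      set C' := (C.erase v).erase (g v) with hC'
      have hgv : g v ∈ C.erase v := Finset.mem_erase.2 ⟨hg2, hg1⟩
      have hsub : C' ⊂ C := by
        refine Finset.ssubset_of_subset_of_ssubset ?_ (Finset.erase_ssubset hv)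
        exact Finset.erase_subset _ _
      have hcard : C'.card + 2 = C.card := by
        rw [hC', Finset.card_erase_of_mem hgv, Finset.card_erase_of_mem hv]
        have : 2 ≤ C.card := by
          have := Finset.card_le_card (show {v, g v} ⊆ C by
            intro x hx; simp at hx; rcases hx with rfl | rfl <;> assumption)
          simpa [Finset.card_insert_of_notMem, hg2.symm, Ne.symm hg2] using this
        omega
      have hev : Even C'.card := by
        refine ih C' hsub ?_
        intro w hw
        have hw' : w ∈ C := Finset.mem_of_mem_erase (Finset.mem_of_mem_erase hw)
        obtain ⟨h1, h2, h3⟩ := h w hw'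
        have hwv : w ≠ v := (Finset.mem_erase.1 (Finset.mem_of_mem_erase hw)).1
        have hwgv : w ≠ g v := (Finset.mem_erase.1 hw).1
        refine ⟨Finset.mem_erase.2 ⟨?_, Finset.mem_erase.2 ⟨?_, h1⟩⟩, h2, h3⟩
        · intro he
          apply hwv
          have := congrArg g he
          rw [h3, hg3] at this
          exact this
        · intro he
          apply hwgv
          have := congrArg g he
          rw [h3] at this
          exact this
      obtain ⟨k, hk⟩ := hev
      exact ⟨k + 1, by omega⟩

/-- Let (Y₁, …, Y₁₀) be pairwise disjoint matchings of K₁₀ whose union is the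
full edge set.  Set E₊ = Y₁ ∪ Y₂ ∪ Y₃ ∪ Y₄ and E₋ = Y₅ ∪ … ∪ Y₁₀.  The graph G on [10] with
an edge {j,j'} whenever there exists k with {j,k} and {j',k} both in E₊ or both in E₋ is
connected. -/
theorem stmt17 (Y : Fin 10 → Finset (Sym2 (Fin 10)))
    (hM : ∀ i, IsMatching 10 (Y i))
    (hd : ∀ i j, i ≠ j → Disjoint (Y i) (Y j))
    (hu : Finset.univ.biUnion Y = allEdges 10)
    (Eplus Eminus : Finset (Sym2 (Fin 10)))
    (hEp : Eplus = (Finset.univ.filter (fun i : Fin 10 => (i : ℕ) < 4)).biUnion Y)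
    (hEm : Eminus = (Finset.univ.filter (fun i : Fin 10 => 4 ≤ (i : ℕ))).biUnion Y) :
    (SimpleGraph.fromRel (fun j j' : Fin 10 => ∃ k : Fin 10,
      (s(j, k) ∈ Eplus ∧ s(j', k) ∈ Eplus) ∨ (s(j, k) ∈ Eminus ∧ s(j', k) ∈ Eminus))).Connected := by
  classical
  set G := SimpleGraph.fromRel (fun j j' : Fin 10 => ∃ k : Fin 10,
      (s(j, k) ∈ Eplus ∧ s(j', k) ∈ Eplus) ∨ (s(j, k) ∈ Eminus ∧ s(j', k) ∈ Eminus)) with hG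
  have hmemP : ∀ e, e ∈ Eplus ↔ ∃ i : Fin 10, (i : ℕ) < 4 ∧ e ∈ Y i := by
    subst hEp; intro e; simp [Finset.mem_biUnion]
  have hmemM : ∀ e, e ∈ Eminus ↔ ∃ i : Fin 10, 4 ≤ (i : ℕ) ∧ e ∈ Y i := by
    subst hEm; intro e; simp [Finset.mem_biUnion]
  have hcover : ∀ v w : Fin 10, v ≠ w → s(v, w) ∈ Eplus ∨ s(v, w) ∈ Eminus := by
    intro v w hvw
    have : s(v, w) ∈ Finset.univ.biUnion Y := by
      rw [hu]; simp [allEdges, Sym2.mk_isDiag_iff, hvw]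
    rw [Finset.mem_biUnion] at this
    obtain ⟨i, -, hi⟩ := this
    rcases lt_or_ge (i : ℕ) 4 with h | h
    · exact Or.inl ((hmemP _).2 ⟨i, h, hi⟩)
    · exact Or.inr ((hmemM _).2 ⟨i, h, hi⟩)
  have hdisj : ∀ e, e ∈ Eplus → e ∈ Eminus → False := by
    intro e he1 he2
    obtain ⟨i, hi, hYi⟩ := (hmemP e).1 he1
    obtain ⟨j, hj, hYj⟩ := (hmemM e).1 he2
    have : i ≠ j := by intro h; subst h; omega
    exact Finset.disjoint_left.1 (hd i j this) hYi hYj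
  -- uniqueness of partner in a matching
  have huniq : ∀ (i : Fin 10) (v w w' : Fin 10), w ≠ v → w' ≠ v →
      s(v, w) ∈ Y i → s(v, w') ∈ Y i → w = w' := by
    intro i v w w' hw hw' h1 h2
    by_contra hne
    have hee : s(v, w) ≠ s(v, w') := by
      intro h
      rcases Sym2.eq_iff.1 h with ⟨-, h'⟩ | ⟨h1', -⟩
      · exact hne h'
      · exact hw' h1'.symm
    exact (hM i).2 _ h1 _ h2 hee v (Sym2.mem_iff.2 (Or.inl rfl)) (Sym2.mem_iff.2 (Or.inl rfl))
  -- the Eplus / Eminus neighbourhoods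
  set Sp : Fin 10 → Finset (Fin 10) :=
    fun v => Finset.univ.filter (fun w => w ≠ v ∧ s(v, w) ∈ Eplus) with hSp
  set Sm : Fin 10 → Finset (Fin 10) :=
    fun v => Finset.univ.filter (fun w => w ≠ v ∧ s(v, w) ∈ Eminus) with hSm
  have hSp_mem : ∀ v w, w ∈ Sp v ↔ w ≠ v ∧ s(v, w) ∈ Eplus := by
    intro v w; simp [hSp]
  have hSm_mem : ∀ v w, w ∈ Sm v ↔ w ≠ v ∧ s(v, w) ∈ Eminus := by
    intro v w; simp [hSm]
  -- the index-picking function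
  set f : Fin 10 → Fin 10 → Fin 10 := fun v w =>
    if h : ∃ i : Fin 10, (i : ℕ) < 4 ∧ s(v, w) ∈ Y i then h.choose else 0 with hfdef
  have hf : ∀ v w, s(v, w) ∈ Eplus → (f v w : ℕ) < 4 ∧ s(v, w) ∈ Y (f v w) := by
    intro v w h
    have h' := (hmemP _).1 h
    simp only [hfdef, dif_pos h']
    exact h'.choose_spec
  have hinj : ∀ v : Fin 10, Set.InjOn (f v) (Sp v) := by
    intro v w hw w' hw' he
    have hw1 := (hSp_mem v w).1 (Finset.mem_coe.1 hw)
    have hw1' := (hSp_mem v w').1 (Finset.mem_coe.1 hw')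
    have h1 := hf v w hw1.2
    have h2 := hf v w' hw1'.2
    exact huniq (f v w) v w w' hw1.1 hw1'.1 h1.2 (he ▸ h2.2)
  have hfilter4 : (Finset.univ.filter (fun i : Fin 10 => (i : ℕ) < 4)).card = 4 := by decide
  have hSple : ∀ v, (Sp v).card ≤ 4 := by
    intro v
    have := Finset.card_le_card_of_injOn
      (t := Finset.univ.filter (fun i : Fin 10 => (i : ℕ) < 4)) (f v)
      (fun w hw => Finset.mem_filter.2 ⟨Finset.mem_univ _, (hf v w ((hSp_mem v w).1 hw).2).1⟩)
      (hinj v)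
    omega
  have hSmge : ∀ v, 5 ≤ (Sm v).card := by
    intro v
    have hun : Sp v ∪ Sm v = Finset.univ.erase v := by
      ext w
      simp only [Finset.mem_union, hSp_mem, hSm_mem, Finset.mem_erase, Finset.mem_univ, and_true]
      constructor
      · rintro (⟨h, -⟩ | ⟨h, -⟩) <;> exact h
      · intro h
        rcases hcover v w (Ne.symm h) with h' | h'
        · exact Or.inl ⟨h, h'⟩
        · exact Or.inr ⟨h, h'⟩
    have hdj : Disjoint (Sp v) (Sm v) := by
      rw [Finset.disjoint_left]
      intro w h1 h2
      exact hdisj _ ((hSp_mem v w).1 h1).2 ((hSm_mem v w).1 h2).2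
    have h9 : (Finset.univ.erase v).card = 9 := by
      rw [Finset.card_erase_of_mem (Finset.mem_univ v)]; simp
    have := Finset.card_union_of_disjoint hdj
    rw [hun, h9] at this
    have := hSple v
    omega
  -- Claim A: an Eplus edge forces a common Eminus neighbour
  have claimA : ∀ j j' : Fin 10, j ≠ j' → s(j, j') ∈ Eplus →
      ∃ k, s(j, k) ∈ Eminus ∧ s(j', k) ∈ Eminus := by
    intro j j' hne hP
    have hP' : s(j', j) ∈ Eplus := by rwa [Sym2.eq_swap] at hP
    set T := (Finset.univ.erase j).erase j' with hT
    have hTcard : T.card = 8 := by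
      rw [hT, Finset.card_erase_of_mem, Finset.card_erase_of_mem (Finset.mem_univ j)]
      · simp
      · exact Finset.mem_erase.2 ⟨Ne.symm hne, Finset.mem_univ j'⟩
    have hsub1 : Sm j ⊆ T := by
      intro x hx
      obtain ⟨hx1, hx2⟩ := (hSm_mem j x).1 hx
      refine Finset.mem_erase.2 ⟨?_, Finset.mem_erase.2 ⟨hx1, Finset.mem_univ x⟩⟩
      rintro rfl
      exact hdisj _ hP hx2
    have hsub2 : Sm j' ⊆ T := by
      intro x hx
      obtain ⟨hx1, hx2⟩ := (hSm_mem j' x).1 hx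
      refine Finset.mem_erase.2 ⟨hx1, Finset.mem_erase.2 ⟨?_, Finset.mem_univ x⟩⟩
      rintro rfl
      exact hdisj _ hP' hx2
    have hunle : (Sm j ∪ Sm j').card ≤ 8 := by
      rw [← hTcard]
      exact Finset.card_le_card (Finset.union_subset hsub1 hsub2)
    have hincl := Finset.card_union_add_card_inter (Sm j) (Sm j')
    have h5 := hSmge j
    have h5' := hSmge j'
    have : 0 < (Sm j ∩ Sm j').card := by omega
    obtain ⟨k, hk⟩ := Finset.card_pos.1 this
    rw [Finset.mem_inter] at hk
    exact ⟨k, ((hSm_mem j k).1 hk.1).2, ((hSm_mem j' k).1 hk.2).2⟩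
  -- building reachability from a common neighbour
  have hreach_of_k : ∀ u w : Fin 10, u ≠ w →
      (∃ k : Fin 10, (s(u, k) ∈ Eplus ∧ s(w, k) ∈ Eplus) ∨
        (s(u, k) ∈ Eminus ∧ s(w, k) ∈ Eminus)) → G.Reachable u w := by
    intro u w hne hk
    have : G.Adj u w := by
      rw [hG, SimpleGraph.fromRel_adj]
      exact ⟨hne, Or.inl hk⟩
    exact this.reachable
  have hreachP : ∀ u w : Fin 10, u ≠ w → s(u, w) ∈ Eplus → G.Reachable u w := by
    intro u w hne hP
    obtain ⟨k, hk⟩ := claimA u w hne hP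
    exact hreach_of_k u w hne ⟨k, Or.inr hk⟩
  -- a non-reachable pair is joined by an Eminus edge
  have hEm_nr : ∀ u w : Fin 10, ¬ G.Reachable u w → s(u, w) ∈ Eminus := by
    intro u w hR
    have hne : u ≠ w := by rintro rfl; exact hR (SimpleGraph.Reachable.refl u)
    rcases hcover u w hne with h | h
    · exact absurd (hreachP u w hne h) hR
    · exact h
  -- key structural analysis for a non-reachable pair
  have NR : ∀ u w : Fin 10, ¬ G.Reachable u w →
      (Sp u).card = 4 ∧ ∀ x : Fin 10, x ∈ insert u (Sp u) ∨ x ∈ insert w (Sp w) := by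
    intro u w hR
    have hne : u ≠ w := by rintro rfl; exact hR (SimpleGraph.Reachable.refl u)
    have hMuw : s(u, w) ∈ Eminus := hEm_nr u w hR
    have hMwu : s(w, u) ∈ Eminus := by rwa [Sym2.eq_swap] at hMuw
    have hnok : ∀ k : Fin 10, ¬((s(u, k) ∈ Eplus ∧ s(w, k) ∈ Eplus) ∨
        (s(u, k) ∈ Eminus ∧ s(w, k) ∈ Eminus)) := by
      intro k hk
      exact hR (hreach_of_k u w hne ⟨k, hk⟩)
    set T := (Finset.univ.erase u).erase w with hT
    have hTcard : T.card = 8 := by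
      rw [hT, Finset.card_erase_of_mem, Finset.card_erase_of_mem (Finset.mem_univ u)]
      · simp
      · exact Finset.mem_erase.2 ⟨Ne.symm hne, Finset.mem_univ w⟩
    have hwSmu : w ∈ Sm u := (hSm_mem u w).2 ⟨Ne.symm hne, hMuw⟩
    have huSmw : u ∈ Sm w := (hSm_mem w u).2 ⟨hne, hMwu⟩
    set A := (Sm u).erase w with hA
    set B := (Sm w).erase u with hB
    have hAcard : A.card + 1 = (Sm u).card := by
      rw [hA, Finset.card_erase_of_mem hwSmu]
      have := Finset.card_pos.2 ⟨w, hwSmu⟩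
      omega
    have hBcard : B.card + 1 = (Sm w).card := by
      rw [hB, Finset.card_erase_of_mem huSmw]
      have := Finset.card_pos.2 ⟨u, huSmw⟩
      omega
    have hA_sub : A ⊆ T := by
      intro x hx
      obtain ⟨hx1, hx2⟩ := Finset.mem_erase.1 hx
      obtain ⟨hx3, -⟩ := (hSm_mem u x).1 hx2
      exact Finset.mem_erase.2 ⟨hx1, Finset.mem_erase.2 ⟨hx3, Finset.mem_univ x⟩⟩
    have hB_sub : B ⊆ T := by
      intro x hx
      obtain ⟨hx1, hx2⟩ := Finset.mem_erase.1 hx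
      obtain ⟨hx3, -⟩ := (hSm_mem w x).1 hx2
      exact Finset.mem_erase.2 ⟨hx3, Finset.mem_erase.2 ⟨hx1, Finset.mem_univ x⟩⟩
    have hAB_disj : Disjoint A B := by
      rw [Finset.disjoint_left]
      intro x h1 h2
      exact hnok x (Or.inr ⟨((hSm_mem u x).1 (Finset.mem_of_mem_erase h1)).2,
        ((hSm_mem w x).1 (Finset.mem_of_mem_erase h2)).2⟩)
    have hABle : A.card + B.card ≤ 8 := by
      rw [← Finset.card_union_of_disjoint hAB_disj, ← hTcard]
      exact Finset.card_le_card (Finset.union_subset hA_sub hB_sub)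
    have h5u := hSmge u
    have h5w := hSmge w
    have hAle4 : A.card ≤ 4 := by omega
    -- Sp u and A partition T
    have hSpT : Sp u ⊆ T := by
      intro x hx
      obtain ⟨hx1, hx2⟩ := (hSp_mem u x).1 hx
      refine Finset.mem_erase.2 ⟨?_, Finset.mem_erase.2 ⟨hx1, Finset.mem_univ x⟩⟩
      rintro rfl
      exact hdisj _ hx2 hMuw
    have hSpA_disj : Disjoint (Sp u) A := by
      rw [Finset.disjoint_left]
      intro x h1 h2
      exact hdisj _ ((hSp_mem u x).1 h1).2 ((hSm_mem u x).1 (Finset.mem_of_mem_erase h2)).2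
    have hSpA_union : Sp u ∪ A = T := by
      apply Finset.Subset.antisymm (Finset.union_subset hSpT hA_sub)
      intro t ht
      obtain ⟨ht1, ht2⟩ := Finset.mem_erase.1 ht
      obtain ⟨ht3, -⟩ := Finset.mem_erase.1 ht2
      rcases hcover u t (Ne.symm ht3) with h | h
      · exact Finset.mem_union_left _ ((hSp_mem u t).2 ⟨ht3, h⟩)
      · exact Finset.mem_union_right _ (Finset.mem_erase.2 ⟨ht1, (hSm_mem u t).2 ⟨ht3, h⟩⟩)
    have hSpu4 : (Sp u).card = 4 := by
      have := Finset.card_union_of_disjoint hSpA_disj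
      rw [hSpA_union, hTcard] at this
      have := hSple u
      omega
    refine ⟨hSpu4, ?_⟩
    intro x
    by_cases hxu : x = u
    · exact Or.inl (Finset.mem_insert.2 (Or.inl hxu))
    by_cases hxw : x = w
    · exact Or.inr (Finset.mem_insert.2 (Or.inl hxw))
    rcases hcover u x (Ne.symm hxu) with h | h
    · exact Or.inl (Finset.mem_insert.2 (Or.inr ((hSp_mem u x).2 ⟨hxu, h⟩)))
    · rcases hcover w x (Ne.symm hxw) with h' | h'
      · exact Or.inr (Finset.mem_insert.2 (Or.inr ((hSp_mem w x).2 ⟨hxw, h'⟩)))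
      · exact absurd (Or.inr ⟨h, h'⟩) (hnok x)
  -- main argument
  rw [SimpleGraph.connected_iff]
  refine ⟨?_, ⟨0⟩⟩
  intro j j'
  by_contra hR
  obtain ⟨hSpj4, hpart⟩ := NR j j' hR
  have hR' : ¬ G.Reachable j' j := fun h => hR h.symm
  obtain ⟨hSpj'4, -⟩ := NR j' j hR'
  set C := insert j (Sp j) with hC
  set D := insert j' (Sp j') with hD
  have hvnotSp : ∀ v : Fin 10, v ∉ Sp v := by
    intro v hv
    exact ((hSp_mem v v).1 hv).1 rfl
  have hreachC : ∀ x ∈ C, G.Reachable j x := by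
    intro x hx
    rcases Finset.mem_insert.1 hx with rfl | hx
    · exact SimpleGraph.Reachable.refl x
    · obtain ⟨h1, h2⟩ := (hSp_mem j x).1 hx
      exact hreachP j x (Ne.symm h1) h2
  have hreachD : ∀ x ∈ D, G.Reachable j' x := by
    intro x hx
    rcases Finset.mem_insert.1 hx with rfl | hx
    · exact SimpleGraph.Reachable.refl x
    · obtain ⟨h1, h2⟩ := (hSp_mem j' x).1 hx
      exact hreachP j' x (Ne.symm h1) h2
  have hCD_disj : ∀ x : Fin 10, x ∈ C → x ∈ D → False := by
    intro x h1 h2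
    exact hR ((hreachC x h1).trans (hreachD x h2).symm)
  have hcardC : C.card = 5 := by
    rw [hC, Finset.card_insert_of_notMem (hvnotSp j), hSpj4]
  -- every vertex of C sees all of C by Eplus edges
  have hSpC : ∀ v ∈ C, Sp v = C.erase v := by
    intro v hv
    have hRv : ¬ G.Reachable v j' := by
      intro h
      exact hR ((hreachC v hv).trans (h.trans
        (hreachD j' (Finset.mem_insert_self j' _)).symm))
    obtain ⟨hSv4, -⟩ := NR v j' hRv
    have hsub : insert v (Sp v) ⊆ C := by
      intro x hx
      rcases Finset.mem_insert.1 hx with rfl | hx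
      · exact hv
      · obtain ⟨hx1, hx2⟩ := (hSp_mem v x).1 hx
        have hrx : G.Reachable j x :=
          (hreachC v hv).trans (hreachP v x (Ne.symm hx1) hx2)
        rcases hpart x with h | h
        · exact h
        · exact absurd (hrx.trans (hreachD x h).symm) hR
    have hveq : insert v (Sp v) = C := by
      apply Finset.eq_of_subset_of_card_le hsub
      rw [hcardC, Finset.card_insert_of_notMem (hvnotSp v), hSv4]
    rw [← hveq, Finset.erase_insert (hvnotSp v)]
  -- each vertex of C has a Y 0 partner inside C
  have hY0 : ∀ v ∈ C, ∃ w : Fin 10, w ≠ v ∧ s(v, w) ∈ Y 0 ∧ w ∈ C := by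
    intro v hv
    have hSv4 : (Sp v).card = 4 := by
      rw [hSpC v hv, Finset.card_erase_of_mem hv, hcardC]
    have himg : (Sp v).image (f v) = Finset.univ.filter (fun i : Fin 10 => (i : ℕ) < 4) := by
      apply Finset.eq_of_subset_of_card_le
      · intro i hi
        obtain ⟨w, hw, rfl⟩ := Finset.mem_image.1 hi
        exact Finset.mem_filter.2 ⟨Finset.mem_univ _, (hf v w ((hSp_mem v w).1 hw).2).1⟩
      · rw [Finset.card_image_of_injOn (hinj v), hSv4, hfilter4]
    have h0 : (0 : Fin 10) ∈ (Sp v).image (f v) := by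
      rw [himg]
      exact Finset.mem_filter.2 ⟨Finset.mem_univ _, by norm_num⟩
    obtain ⟨w, hw, hfw⟩ := Finset.mem_image.1 h0
    obtain ⟨hw1, hw2⟩ := (hSp_mem v w).1 hw
    refine ⟨w, hw1, ?_, ?_⟩
    · have := (hf v w hw2).2
      rwa [hfw] at this
    · have : w ∈ C.erase v := by rw [← hSpC v hv]; exact hw
      exact Finset.mem_of_mem_erase this
  -- the fixed-point-free involution given by Y 0 on C
  set g : Fin 10 → Fin 10 := fun v =>
    if h : ∃ w : Fin 10, w ≠ v ∧ s(v, w) ∈ Y 0 then h.choose else v with hgdef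
  have hgspec : ∀ v : Fin 10, (∃ w : Fin 10, w ≠ v ∧ s(v, w) ∈ Y 0) →
      g v ≠ v ∧ s(v, g v) ∈ Y 0 := by
    intro v h
    simp only [hgdef, dif_pos h]
    exact h.choose_spec
  have hg : ∀ v ∈ C, g v ∈ C ∧ g v ≠ v ∧ g (g v) = v := by
    intro v hv
    obtain ⟨w, hw1, hw2, hw3⟩ := hY0 v hv
    obtain ⟨hg1, hg2⟩ := hgspec v ⟨w, hw1, hw2⟩
    have hgw : g v = w := huniq 0 v (g v) w hg1 hw1 hg2 hw2
    have hgvC : g v ∈ C := hgw ▸ hw3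
    refine ⟨hgvC, hg1, ?_⟩
    have hex2 : ∃ w' : Fin 10, w' ≠ g v ∧ s(g v, w') ∈ Y 0 :=
      ⟨v, fun h => hg1 h.symm, by rwa [Sym2.eq_swap] at hg2⟩
    obtain ⟨hg3, hg4⟩ := hgspec (g v) hex2
    exact (huniq 0 (g v) (g (g v)) v hg3 (fun h => hg1 h.symm) hg4
      (by rwa [Sym2.eq_swap] at hg2)).symm ▸ rfl
  have := even_card_of_fpf_invol g C hg
  rw [hcardC] at this
  exact (by decide : ¬ Even 5) this
end
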